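/- arXiv:2311.15431 — 2 statements merged into one kernel-verified Lean document; each statement's English description precedes it below -/
import Mathlib

section
/- For any nonempty word u over a finite alphabet, the piecewise minimality index satisfies ρ(u) = 1 + max{ r(v₁,a) + ℓ(a,v₂) : u = v₁·a·v₂ a factorization of u with a a letter }. -/
variable {A : Type*}

/-- Simon's congruence of order `k`: `u` and `v` have the same subwords of length ≤ k. -/
def SimonCong (k : ℕ) (u v : List A) : Prop :=
  ∀ s : List A, s.length ≤ k → (s.Sublist u ↔ s.Sublist v)

/-- Subword distance `δ(u,v) = sup {k | u ∼ₖ v} ∈ ℕ∞`. -/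
noncomputable def sdelta (u v : List A) : ℕ∞ :=
  sSup {d : ℕ∞ | ∃ k : ℕ, d = k ∧ SimonCong k u v}

/-- Right side distance `r(u,t) = δ(u, u·t)`. -/
noncomputable def rdist (u t : List A) : ℕ∞ := sdelta u (u ++ t)

/-- Left side distance `ℓ(t,u) = δ(t·u, u)`. -/
noncomputable def ldist (t u : List A) : ℕ∞ := sdelta (t ++ u) u

/-- Piecewise complexity `h(u)`: least `n` such that any `v` with `u ∼ₙ v` equals `u`. -/
noncomputable def pcHeight (u : List A) : ℕ :=
  sInf {n : ℕ | ∀ v : List A, SimonCong n u v → v = u}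

/-- `u` is `m`-reduced: no strict subword of `u` is `∼ₘ`-equivalent to `u`. -/
def Reduced (m : ℕ) (u : List A) : Prop :=
  ∀ u' : List A, u'.Sublist u → u' ≠ u → ¬ SimonCong m u u'

/-- Piecewise minimality index `ρ(u)`: least `m` such that `u` is `m`-reduced. -/
noncomputable def pcRho (u : List A) : ℕ := sInf {m : ℕ | Reduced m u}

/-- An `A`-arch: contains every letter of `A` but no strict prefix does. -/
def IsArch (A : Type*) [Fintype A] (s : List A) : Prop :=
  (∀ a : A, a ∈ s) ∧ ∀ t : List A, t <+: s → t ≠ s → ∃ a : A, a ∉ t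

/-- The infinite periodic word `u^ω`. -/
def omegaWord (u : List A) (hu : u ≠ []) (i : ℕ) : A :=
  u.get ⟨i % u.length, Nat.mod_lt i (List.length_pos_iff.mpr hu)⟩

/-- The arch-jumping function `α` on `u^ω`: `α(i)` is the least `j > i` such that
every letter of `A` occurs among positions `i, …, j-1` of `u^ω`. -/
noncomputable def archJump (u : List A) (hu : u ≠ []) (i : ℕ) : ℕ :=
  sInf {j : ℕ | i < j ∧ ∀ a : A, ∃ m : ℕ, i ≤ m ∧ m < j ∧ omegaWord u hu m = a}

/-- `p` is an arch-period of `u` starting at `i`. -/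
def IsArchPeriodAt (u : List A) (hu : u ≠ []) (i p : ℕ) : Prop :=
  0 < p ∧ ∃ k : ℕ, (archJump u hu)^[k + p] i ≡ (archJump u hu)^[k] i [MOD u.length]

/-- The arch-period of `u`: the least arch-period starting at 0. -/
noncomputable def archPeriod (u : List A) (hu : u ≠ []) : ℕ :=
  sInf {p : ℕ | IsArchPeriodAt u hu 0 p}

/-- `K_u`: the least `k` with `α^{k+p}(0) ≡ α^k(0) (mod L)`. -/
noncomputable def archTransientIndex (u : List A) (hu : u ≠ []) : ℕ :=
  sInf {k : ℕ |
    (archJump u hu)^[k + archPeriod u hu] 0 ≡ (archJump u hu)^[k] 0 [MOD u.length]}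

/-- The transient `T_u = α^{K_u}(0)`. -/
noncomputable def archTransient (u : List A) (hu : u ≠ []) : ℕ :=
  (archJump u hu)^[archTransientIndex u hu] 0

/-- The span `Δ_u = α^{K_u+p_u}(0) − α^{K_u}(0)`. -/
noncomputable def archSpan (u : List A) (hu : u ≠ []) : ℕ :=
  (archJump u hu)^[archTransientIndex u hu + archPeriod u hu] 0 - archTransient u hu

/-- `u^n`: the `n`-fold concatenation of `u`. -/
def listPow (u : List A) (n : ℕ) : List A := (List.replicate n u).flatten

/-!
Every strict subword of `u` lies below a one-letter deletion `v₁ v₂` of a factorization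
`u = v₁ a v₂`, and `u ∼ₘ u'` with `u' ≼ w ≼ u` forces `u ∼ₘ w`; so `u` is `m`-reduced iff
`m > δ(v₁ a v₂, v₁ v₂)` for every factorization. That distance splits as `r(v₁, a) + ℓ(a, v₂)`:
a subword of `v₁ a v₂` is lost by deleting `a` only if it reads `x a y` with `x a ⋠ v₁` and
`a y ⋠ v₂`, and the shortest such `x` and `y` have lengths `r(v₁, a)` and `ℓ(a, v₂)`.
-/

section SimonCongruence

theorem simonCong_zero (u v : List A) : SimonCong 0 u v := by
  intro s hs
  rw [List.eq_nil_of_length_eq_zero (Nat.le_zero.mp hs)]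
  simp

theorem SimonCong.mono {j k : ℕ} {u v : List A} (h : SimonCong k u v) (hjk : j ≤ k) :
    SimonCong j u v :=
  fun s hs => h s (hs.trans hjk)

theorem SimonCong.eq_of_length_le {k : ℕ} {u v : List A} (h : SimonCong k u v)
    (hu : u.length ≤ k) (hv : v.length ≤ k) : u = v :=
  ((h u hu).mp (List.Sublist.refl u)).antisymm ((h v hv).mpr (List.Sublist.refl v))

theorem SimonCong.symm {k : ℕ} {u v : List A} (h : SimonCong k u v) : SimonCong k v u :=
  fun s hs => (h s hs).symm

theorem SimonCong.of_sublist_of_sublist {m : ℕ} {u u' w : List A} (h : SimonCong m u u')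
    (hu'w : u'.Sublist w) (hwu : w.Sublist u) : SimonCong m u w :=
  fun s hs => ⟨fun hsu => ((h s hs).mp hsu).trans hu'w, fun hsw => hsw.trans hwu⟩

theorem natCast_le_sdelta_iff {k : ℕ} {u v : List A} :
    (k : ℕ∞) ≤ sdelta u v ↔ SimonCong k u v := by
  refine ⟨fun hk => ?_, fun hk => le_sSup ⟨k, rfl, hk⟩⟩
  by_contra hnk
  have hk0 : k ≠ 0 := by
    rintro rfl
    exact hnk (simonCong_zero u v)
  have hle : sdelta u v ≤ (k - 1 : ℕ) := by
    refine sSup_le ?_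
    rintro _ ⟨j, rfl, hj⟩
    have hjk : j < k := lt_of_not_ge fun hkj => hnk (hj.mono hkj)
    exact_mod_cast Nat.le_sub_one_of_lt hjk
  have := hk.trans hle
  norm_cast at this
  omega

theorem sdelta_eq_natCast_iff {n : ℕ} {u v : List A} :
    sdelta u v = n ↔ SimonCong n u v ∧ ¬ SimonCong (n + 1) u v := by
  rw [← natCast_le_sdelta_iff, ← natCast_le_sdelta_iff, Nat.cast_add_one, not_le,
    ENat.lt_natCast_add_one_iff, le_antisymm_iff, and_comm]

theorem sdelta_lt_of_ne {u v : List A} (h : u ≠ v) :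
    sdelta u v < (max u.length v.length : ℕ) := by
  by_contra hge
  exact h ((natCast_le_sdelta_iff.mp (not_lt.mp hge)).eq_of_length_le
    (le_max_left _ _) (le_max_right _ _))

theorem exists_sdelta_eq_natCast_of_ne {u v : List A} (h : u ≠ v) :
    ∃ n : ℕ, sdelta u v = n :=
  (ENat.ne_top_iff_exists.mp (sdelta_lt_of_ne h).ne_top).imp fun _ => Eq.symm

end SimonCongruence

section Deletion

theorem List.Sublist.exists_deletion {u' u : List A} (h : u'.Sublist u) (hne : u' ≠ u) :
    ∃ (v₁ : List A) (a : A) (v₂ : List A), u = v₁ ++ [a] ++ v₂ ∧ u'.Sublist (v₁ ++ v₂) := by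
  induction h with
  | slnil => exact absurd rfl hne
  | cons b h _ => exact ⟨[], b, _, rfl, h⟩
  | cons_cons b _ ih =>
    obtain ⟨v₁, a, v₂, rfl, hsub⟩ := ih fun he => hne (congrArg (List.cons b) he)
    exact ⟨b :: v₁, a, v₂, rfl, hsub.cons_cons b⟩

theorem deletion_sublist (v₁ v₂ : List A) (a : A) : (v₁ ++ v₂).Sublist (v₁ ++ [a] ++ v₂) := by
  rw [List.append_assoc]
  exact (List.sublist_cons_self a v₂).append_left v₁

theorem simonCong_deletion {R L : ℕ} {v₁ v₂ : List A} {a : A}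
    (hR : SimonCong R v₁ (v₁ ++ [a])) (hL : SimonCong L (a :: v₂) v₂) :
    SimonCong (R + L) (v₁ ++ [a] ++ v₂) (v₁ ++ v₂) := by
  refine fun s hs => ⟨fun hsub => ?_, fun hsub => hsub.trans (deletion_sublist v₁ v₂ a)⟩
  rw [List.append_assoc, List.singleton_append] at hsub
  obtain ⟨s₁, s₂, rfl, h₁, h₂⟩ := List.sublist_append_iff.mp hsub
  rw [List.length_append] at hs
  by_cases hs₂ : s₂.length ≤ L
  · exact h₁.append ((hL s₂ hs₂).mp h₂)
  rcases List.sublist_cons_iff.mp h₂ with h₂ | ⟨t, rfl, ht⟩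
  · exact h₁.append h₂
  have hs₁a : (s₁ ++ [a]).Sublist v₁ :=
    (hR _ (by simp at hs hs₂ ⊢; omega)).mpr (h₁.append (List.Sublist.refl [a]))
  simpa using hs₁a.append ht

theorem exists_sublist_not_sublist_of_not_simonCong {k : ℕ} {u v : List A} (hvu : v.Sublist u)
    (h : ¬ SimonCong k u v) : ∃ s : List A, s.length ≤ k ∧ s.Sublist u ∧ ¬ s.Sublist v := by
  obtain ⟨s, hs, hiff⟩ : ∃ s : List A, s.length ≤ k ∧ ¬ (s.Sublist u ↔ s.Sublist v) := by
    simpa [SimonCong] using h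
  have hsv : ¬ s.Sublist v := fun hsv => hiff ⟨fun _ => hsv, fun _ => hsv.trans hvu⟩
  exact ⟨s, hs, by_contra fun hsu => hiff (iff_of_false hsu hsv), hsv⟩

theorem exists_sublist_not_append_singleton_sublist {n : ℕ} {v : List A} {a : A}
    (h : ¬ SimonCong (n + 1) v (v ++ [a])) :
    ∃ x : List A, x.length ≤ n ∧ x.Sublist v ∧ ¬ (x ++ [a]).Sublist v := by
  obtain ⟨s, hs, hsva, hsv⟩ := exists_sublist_not_sublist_of_not_simonCong
    (List.sublist_append_left v [a]) fun h' => h h'.symm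
  obtain ⟨x, s₂, rfl, hx, hs₂⟩ := List.sublist_append_iff.mp hsva
  rcases List.sublist_singleton.mp hs₂ with rfl | rfl
  · exact absurd (by simpa using hx) hsv
  · exact ⟨x, by simpa using hs, hx, hsv⟩

theorem exists_sublist_not_cons_sublist {n : ℕ} {v : List A} {a : A}
    (h : ¬ SimonCong (n + 1) (a :: v) v) :
    ∃ y : List A, y.length ≤ n ∧ y.Sublist v ∧ ¬ (a :: y).Sublist v := by
  obtain ⟨s, hs, hsav, hsv⟩ :=
    exists_sublist_not_sublist_of_not_simonCong (List.sublist_cons_self a v) h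
  rcases List.sublist_cons_iff.mp hsav with hs' | ⟨y, rfl, hy⟩
  · exact absurd hs' hsv
  · exact ⟨y, by simpa using hs, hy, hsv⟩

theorem not_sublist_append_of_not_sublist {x y v₁ v₂ : List A} {a : A}
    (hx : ¬ (x ++ [a]).Sublist v₁) (hy : ¬ (a :: y).Sublist v₂) :
    ¬ (x ++ a :: y).Sublist (v₁ ++ v₂) := by
  intro hsub
  obtain ⟨p, q, hpq, hp, hq⟩ := List.sublist_append_iff.mp hsub
  rcases List.append_eq_append_iff.mp hpq with ⟨_ | ⟨b, t⟩, rfl, hay⟩ | ⟨c, rfl, rfl⟩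
  · exact hy (by simpa [hay] using hq)
  · obtain ⟨rfl, -⟩ := List.cons.inj hay
    exact hx ((((List.nil_sublist t).cons_cons a).append_left x).trans hp)
  · exact hy ((List.sublist_append_right c _).trans hq)

theorem not_simonCong_deletion {R L : ℕ} {v₁ v₂ : List A} {a : A}
    (hR : ¬ SimonCong (R + 1) v₁ (v₁ ++ [a])) (hL : ¬ SimonCong (L + 1) (a :: v₂) v₂) :
    ¬ SimonCong (R + L + 1) (v₁ ++ [a] ++ v₂) (v₁ ++ v₂) := by
  obtain ⟨x, hxlen, hxv, hxa⟩ := exists_sublist_not_append_singleton_sublist hR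
  obtain ⟨y, hylen, hyv, hay⟩ := exists_sublist_not_cons_sublist hL
  intro h
  refine not_sublist_append_of_not_sublist hxa hay ((h _ ?_).mp ?_)
  · simp only [List.length_append, List.length_cons]
    omega
  · simpa using (hxv.append (List.Sublist.refl [a])).append hyv

theorem sdelta_deletion (v₁ v₂ : List A) (a : A) :
    sdelta (v₁ ++ [a] ++ v₂) (v₁ ++ v₂) = rdist v₁ [a] + ldist [a] v₂ := by
  obtain ⟨R, hR⟩ := exists_sdelta_eq_natCast_of_ne (u := v₁) (v := v₁ ++ [a]) (by simp)
  obtain ⟨L, hL⟩ := exists_sdelta_eq_natCast_of_ne (u := a :: v₂) (v := v₂) (by simp)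
  rw [sdelta_eq_natCast_iff] at hR hL
  rw [rdist, ldist, List.singleton_append, sdelta_eq_natCast_iff.mpr hR,
    sdelta_eq_natCast_iff.mpr hL, ← Nat.cast_add, sdelta_eq_natCast_iff]
  exact ⟨simonCong_deletion hR.1 hL.1, not_simonCong_deletion hR.2 hL.2⟩

end Deletion

section MinimalityIndex

def deletionDistances (u : List A) : Set ℕ∞ :=
  {d | ∃ (v₁ v₂ : List A) (a : A), u = v₁ ++ [a] ++ v₂ ∧ d = rdist v₁ [a] + ldist [a] v₂}

theorem reduced_iff_forall_deletionDistances_lt {m : ℕ} {u : List A} :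
    Reduced m u ↔ ∀ d ∈ deletionDistances u, d < m := by
  constructor
  · rintro hred _ ⟨v₁, v₂, a, rfl, rfl⟩
    rw [← sdelta_deletion, ← not_le, natCast_le_sdelta_iff]
    refine hred _ (deletion_sublist v₁ v₂ a) fun he => ?_
    simpa using congrArg List.length he
  · intro hlt u' hsub hne hcong
    obtain ⟨v₁, a, v₂, rfl, hsub'⟩ := hsub.exists_deletion hne
    have := hlt _ ⟨v₁, v₂, a, rfl, rfl⟩
    rw [← sdelta_deletion, ← not_le, natCast_le_sdelta_iff] at this
    exact this (hcong.of_sublist_of_sublist hsub' (deletion_sublist v₁ v₂ a))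

theorem deletionDistances_subset_Iio (u : List A) :
    deletionDistances u ⊆ Nat.cast '' Set.Iio u.length := by
  rintro _ ⟨v₁, v₂, a, rfl, rfl⟩
  have hne : v₁ ++ [a] ++ v₂ ≠ v₁ ++ v₂ := fun he => by simpa using congrArg List.length he
  obtain ⟨n, hn⟩ := exists_sdelta_eq_natCast_of_ne hne
  have hlt := sdelta_lt_of_ne hne
  rw [hn, Nat.cast_lt] at hlt
  rw [← sdelta_deletion, hn]
  exact ⟨n, by simpa using hlt, rfl⟩

theorem exists_sSup_deletionDistances_mem {u : List A} (hu : u ≠ []) :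
    ∃ n : ℕ, (n : ℕ∞) = sSup (deletionDistances u) ∧ (n : ℕ∞) ∈ deletionDistances u := by
  obtain ⟨b, l, rfl⟩ := List.exists_cons_of_ne_nil hu
  have hmem : sSup (deletionDistances (b :: l)) ∈ deletionDistances (b :: l) :=
    Set.Nonempty.csSup_mem ⟨_, [], l, b, rfl, rfl⟩
      (((Set.finite_Iio _).image _).subset (deletionDistances_subset_Iio _))
  obtain ⟨n, -, hn⟩ := deletionDistances_subset_Iio _ hmem
  exact ⟨n, hn, hn ▸ hmem⟩

end MinimalityIndex

theorem stmt1_general {A : Type*} (u : List A) (hu : u ≠ []) :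
    (pcRho u : ℕ∞) =
      1 + sSup {d : ℕ∞ | ∃ (v₁ v₂ : List A) (a : A),
          u = v₁ ++ [a] ++ v₂ ∧ d = rdist v₁ [a] + ldist [a] v₂} := by
  obtain ⟨n, hsup, hmem⟩ := exists_sSup_deletionDistances_mem hu
  have hreduced : {m : ℕ | Reduced m u} = Set.Ici (n + 1) := by
    ext m
    rw [Set.mem_Ici, Set.mem_ofPred, reduced_iff_forall_deletionDistances_lt, Nat.add_one_le_iff,
      ← Nat.cast_lt (α := ℕ∞)]
    exact ⟨fun h => h _ hmem, fun h d hd => (hsup ▸ le_sSup hd).trans_lt h⟩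
  change _ = 1 + sSup (deletionDistances u)
  rw [← hsup, pcRho, hreduced, csInf_Ici, Nat.cast_add_one, add_comm]

/-- characterisation of the piecewise minimality index `ρ(u)`. -/
theorem stmt1 {A : Type*} [Fintype A] (u : List A) (hu : u ≠ []) :
    (pcRho u : ℕ∞) =
      1 + sSup {d : ℕ∞ | ∃ (v₁ v₂ : List A) (a : A),
          u = v₁ ++ [a] ++ v₂ ∧ d = rdist v₁ [a] + ldist [a] v₂} :=
  stmt1_general u hu
end

section
/- For all words u, v over a finite alphabet, h(u) ≤ h(u·v) and h(v) ≤ h(u·v). -/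
/-! Let `n = h(u·v)`. Since `∼ₙ` is a congruence, any `u' ∼ₙ u` gives `u'·v ∼ₙ u·v`, hence
`u'·v = u·v` and `u' = u` by cancellation; so `h(u) ≤ n`, and symmetrically for `v`. -/

variable {A : Type*}

namespace SimonCong

theorem refl (n : ℕ) (u : List A) : SimonCong n u u := fun _ _ => Iff.rfl

theorem append {n : ℕ} {u u' v v' : List A} (hu : SimonCong n u u') (hv : SimonCong n v v') :
    SimonCong n (u ++ v) (u' ++ v') := by
  intro s hs
  simp only [List.sublist_append_iff]
  constructor <;> rintro ⟨s₁, s₂, rfl, h₁, h₂⟩ <;> refine ⟨s₁, s₂, rfl, ?_, ?_⟩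
  · exact (hu s₁ (by simp at hs; omega)).mp h₁
  · exact (hv s₂ (by simp at hs; omega)).mp h₂
  · exact (hu s₁ (by simp at hs; omega)).mpr h₁
  · exact (hv s₂ (by simp at hs; omega)).mpr h₂

/-- A word `v` longer than `u` has a prefix of length `|u| + 1`, which is no subword of `u`. -/
theorem eq_of_length_succ {u v : List A} (h : SimonCong (u.length + 1) u v) : v = u := by
  have huv : u.Sublist v := (h u (by omega)).mp (List.Sublist.refl u)
  by_cases hv : v.length ≤ u.length + 1
  · exact ((h v hv).mpr (List.Sublist.refl v)).antisymm huv
  · have htake : (v.take (u.length + 1)).Sublist u :=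
      (h _ (by simp)).mpr (List.take_sublist _ _)
    have := htake.length_le
    simp only [List.length_take] at this
    omega

end SimonCong

theorem eq_of_simonCong_pcHeight {u v : List A} (h : SimonCong (pcHeight u) u v) : v = u :=
  Nat.sInf_mem (s := {n | ∀ v, SimonCong n u v → v = u})
    ⟨u.length + 1, fun _ => SimonCong.eq_of_length_succ⟩ v h

theorem pcHeight_le_of_forall {n : ℕ} {u : List A} (h : ∀ v, SimonCong n u v → v = u) :
    pcHeight u ≤ n :=
  Nat.sInf_le h

theorem stmt6_general {A : Type*} (u v : List A) :
    pcHeight u ≤ pcHeight (u ++ v) ∧ pcHeight v ≤ pcHeight (u ++ v) := by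
  constructor
  · exact pcHeight_le_of_forall fun w hw =>
      List.append_cancel_right (eq_of_simonCong_pcHeight (hw.append (SimonCong.refl _ v)))
  · exact pcHeight_le_of_forall fun w hw =>
      List.append_cancel_left (eq_of_simonCong_pcHeight ((SimonCong.refl _ u).append hw))

/-- monotonicity of `h` w.r.t. concatenation. -/
theorem stmt6 {A : Type*} [Fintype A] (u v : List A) :
    pcHeight u ≤ pcHeight (u ++ v) ∧ pcHeight v ≤ pcHeight (u ++ v) :=
  stmt6_general u v
end
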